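/- Let G be a strongly connected digraph with start vertex s and let e=(u,v) be a common bridge of G_s and G_s^R. If C is a strongly connected component of G\e containing some vertex of D(v) ∩ D^R(u), then C ⊆ D(v) ∩ D^R(u). -/

import Mathlib

namespace StrongConn

variable {V : Type*}

/-- `p` is a walk in the digraph `G` from `u` to `v`, recorded as the list of visited vertices. -/
def IsWalk (G : V → V → Prop) (u v : V) (p : List V) : Prop :=
  p.Chain' G ∧ p.head? = some u ∧ p.getLast? = some v

/-- The directed edge `(a,b)` occurs on the walk `p`. -/
def EdgeOn (a b : V) (p : List V) : Prop := (a, b) ∈ p.zip p.tail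

/-- `v` is reachable from `u` in `G`. -/
def Reach (G : V → V → Prop) (u v : V) : Prop := ∃ p, IsWalk G u v p

/-- `u` and `v` are strongly connected in `G`. -/
def SConn (G : V → V → Prop) (u v : V) : Prop := Reach G u v ∧ Reach G v u

def StronglyConnected (G : V → V → Prop) : Prop := ∀ u v, Reach G u v

/-- `G` with the edge `(a,b)` deleted. -/
def DelEdge (G : V → V → Prop) (a b : V) : V → V → Prop :=
  fun x y => G x y ∧ ¬(x = a ∧ y = b)

/-- `G` with the vertex `u` (and all incident edges) deleted. -/
def DelVertex (G : V → V → Prop) (u : V) : V → V → Prop :=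
  fun x y => G x y ∧ x ≠ u ∧ y ≠ u

/-- `C` is a strongly connected component of `G`. -/
def IsSCC (G : V → V → Prop) (C : Set V) : Prop :=
  C.Nonempty ∧ (∀ x ∈ C, ∀ y ∈ C, SConn G x y) ∧ ∀ x ∈ C, ∀ y, SConn G x y → y ∈ C

/-- `(a,b)` is a strong bridge: an edge whose removal increases the number of
strongly connected components, i.e. it separates some strongly connected pair. -/
def IsStrongBridge (G : V → V → Prop) (a b : V) : Prop :=
  G a b ∧ ∃ x y, SConn G x y ∧ ¬ SConn (DelEdge G a b) x y

/-- `u` is a strong articulation point: removing it increases the number of strongly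
connected components, i.e. it separates some strongly connected pair of other vertices. -/
def IsStrongArticulationPoint (G : V → V → Prop) (u : V) : Prop :=
  ∃ x y, x ≠ u ∧ y ≠ u ∧ SConn G x y ∧ ¬ SConn (DelVertex G u) x y

/-- The reverse digraph. -/
def Rev (G : V → V → Prop) : V → V → Prop := fun x y => G y x

/-- `u` dominates `v` in the flow graph `G_s`; equivalently, `u` is an ancestor of `v`
(and `v` a descendant of `u`) in the dominator tree of `G_s`. -/
def Dom (G : V → V → Prop) (s u v : V) : Prop :=
  ∀ p, IsWalk G s v p → u ∈ p

/-- `u` is the immediate dominator of `v` in `G_s` (the parent of `v` in the dominator tree). -/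
def Idom (G : V → V → Prop) (s u v : V) : Prop :=
  u ≠ v ∧ Dom G s u v ∧ ∀ w, w ≠ v → Dom G s w v → Dom G s w u

/-- Edge `(a,b)` is a bridge of the flow graph `G_s`: every walk from `s` to `b` uses it. -/
def IsBridge (G : V → V → Prop) (s a b : V) : Prop :=
  G a b ∧ ∀ p, IsWalk G s b p → EdgeOn a b p

/-- `r` is the head of some bridge of `G_s`, i.e. a non-`s` root in the bridge
decomposition of the dominator tree. -/
def IsBridgeHead (G : V → V → Prop) (s r : V) : Prop :=
  ∃ a, IsBridge G s a r

/-- `r` is the root of the tree containing `x` in the bridge decomposition of the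
dominator tree of `G_s`: `r` dominates `x`, `r` is `s` or a bridge head, and every
bridge head dominating `x` dominates `r`. -/
def IsBDRoot (G : V → V → Prop) (s r x : V) : Prop :=
  Dom G s r x ∧ (r = s ∨ IsBridgeHead G s r) ∧
    ∀ z, Dom G s z x → IsBridgeHead G s z → Dom G s z r

/-- A depth-first search tree of `G` rooted at `s`, given by a parent function and a
preorder numbering. -/
structure DFSTree (G : V → V → Prop) (s : V) where
  parent : V → V
  pre : V → ℕ
  parent_root : parent s = s
  parent_edge : ∀ v, v ≠ s → G (parent v) v
  root_reach : ∀ v, ∃ n, parent^[n] v = s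
  pre_inj : Function.Injective pre
  pre_parent : ∀ v, v ≠ s → pre (parent v) < pre v
  /-- Descendants of a vertex form a contiguous interval in preorder. -/
  interval : ∀ u v w, (∃ n, parent^[n] w = u) → pre u ≤ pre v → pre v ≤ pre w →
      ∃ n, parent^[n] v = u
  /-- The defining property of depth-first search trees: every edge going forward
  in preorder goes to a descendant. -/
  dfs_edge : ∀ u v, G u v → pre u < pre v → ∃ n, parent^[n] v = u

/-- `u` is an ancestor of `v` in the tree `T` (every vertex is an ancestor of itself). -/
def DFSTree.Anc {G : V → V → Prop} {s : V} (T : DFSTree G s) (u v : V) : Prop :=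
  ∃ n, T.parent^[n] v = u

/-- `x ∈ loop(u)` with respect to the tree-ancestor relation `tanc`: `x` is a descendant
of `u` and there is a walk from `x` to `u` using only descendants of `u`. -/
def InLoop (G : V → V → Prop) (tanc : V → V → Prop) (u x : V) : Prop :=
  tanc u x ∧ ∃ p, IsWalk G x u p ∧ ∀ y ∈ p, tanc u y

/-- `hp` is the parent function of the loop nesting tree of `G_s` with respect to the
DFS-tree ancestor relation `tanc`: `hp x` is the nearest proper ancestor `u` of `x`
in the DFS tree with `x ∈ loop(u)`. -/
def IsLoopParent (G : V → V → Prop) (s : V) (tanc : V → V → Prop) (hp : V → V) : Prop :=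
  hp s = s ∧ ∀ x, x ≠ s →
    (tanc (hp x) x ∧ hp x ≠ x ∧ InLoop G tanc (hp x) x ∧
      ∀ u, tanc u x → u ≠ x → InLoop G tanc u x → tanc u (hp x))

/-- `u` is an ancestor of `v` in the loop nesting tree with parent function `hp`. -/
def HAnc (hp : V → V) (u v : V) : Prop := ∃ n, hp^[n] v = u

/-- `w` is the nearest common ancestor of `x` and `y` in the loop nesting tree
with parent function `hp`. -/
def HNca (hp : V → V) (x y w : V) : Prop :=
  HAnc hp w x ∧ HAnc hp w y ∧ ∀ z, HAnc hp z x → HAnc hp z y → HAnc hp z w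

/-- `u` is a nontrivial dominator of `G_s`: `u ≠ s` and `u` is not a leaf of the
dominator tree (it properly dominates some vertex). -/
def NontrivialDom (G : V → V → Prop) (s u : V) : Prop :=
  u ≠ s ∧ ∃ w, w ≠ u ∧ Dom G s u w

/-- `a` and `b` are siblings in the dominator tree of `G_s`. -/
def SiblingInD (G : V → V → Prop) (s a b : V) : Prop :=
  a ≠ b ∧ ∃ w, Idom G s w a ∧ Idom G s w b

/-- Given the bridge-decomposition root function `r` and loop-nesting parent `hp`,
`z` is a boundary vertex. -/
def Boundary (s : V) (r hp : V → V) (z : V) : Prop := z = s ∨ r (hp z) ≠ r z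

/-- `z` is the nearest boundary ancestor of `x` in the loop nesting tree. -/
def IsNearestBoundary (s : V) (r hp : V → V) (x z : V) : Prop :=
  HAnc hp z x ∧ Boundary s r hp z ∧
    ∀ z', HAnc hp z' x → Boundary s r hp z' → HAnc hp z' z

/-- `x` and `y` are 2-edge-connected: no single edge deletion leaves them in
different strongly connected components. -/
def TwoEdgeConnected (G : V → V → Prop) (x y : V) : Prop :=
  ∀ a b, G a b → SConn (DelEdge G a b) x y


/-!
If `y` reaches `x` in `G \ (u,v)` but some walk from `s` to `y` avoids `v`, that walk avoids the
edge `(u,v)` as well, so `s` reaches `x` in `G \ (u,v)`. Since `v` dominates `x`, such a walk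
passes through `v`, and its prefix reaches `v` without the bridge `(u,v)`: impossible. The same
argument in `G^R`, applied to the reversal of a walk from `x` to `y`, gives `u ∈ D^R(y)`.
-/

section Walks

variable {G H : V → V → Prop} {a b c : V} {p : List V}

theorem EdgeOn.rel (he : EdgeOn a b p) (hp : p.IsChain G) : G a b := by
  induction p with
  | nil => simp [EdgeOn] at he
  | cons w l ih =>
    cases l with
    | nil => simp [EdgeOn] at he
    | cons w' l =>
      simp only [EdgeOn, List.tail_cons, List.zip_cons_cons, List.mem_cons,
        Prod.mk.injEq] at he
      rcases he with ⟨rfl, rfl⟩ | he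
      · exact (List.isChain_cons_cons.mp hp).1
      · exact ih he hp.tail

theorem reach_iff_reflTransGen : Reach G a b ↔ Relation.ReflTransGen G a b := by
  constructor
  · rintro ⟨p, hp, hhead, hlast⟩
    have hne : p ≠ [] := by rintro rfl; simp at hhead
    rw [List.head?_eq_some_head hne, Option.some_inj] at hhead
    rw [List.getLast?_eq_some_getLast hne, Option.some_inj] at hlast
    exact hhead ▸ hlast ▸ List.relationReflTransGen_of_exists_isChain p hp hne
  · intro h
    obtain ⟨p, hne, hp, hhead, hlast⟩ := List.exists_isChain_ne_nil_of_relationReflTransGen h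
    exact ⟨p, hp, by simp [List.head?_eq_some_head hne, hhead],
      by simp [List.getLast?_eq_some_getLast hne, hlast]⟩

theorem Reach.trans (hab : Reach G a b) (hbc : Reach G b c) : Reach G a c :=
  reach_iff_reflTransGen.mpr <|
    (reach_iff_reflTransGen.mp hab).trans (reach_iff_reflTransGen.mp hbc)

theorem Reach.rev (h : Reach G a b) : Reach (Rev G) b a :=
  reach_iff_reflTransGen.mpr (reach_iff_reflTransGen.mp h).swap

theorem IsWalk.mono (hHG : H ≤ G) (h : IsWalk H a b p) : IsWalk G a b p :=
  ⟨h.1.imp hHG, h.2⟩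

theorem IsWalk.reach_of_mem (h : IsWalk G a b p) (hc : c ∈ p) : Reach G a c := by
  obtain ⟨l₁, l₂, rfl⟩ := List.append_of_mem hc
  refine ⟨l₁ ++ [c], (List.isChain_split.mp h.1).1, ?_, by simp⟩
  cases l₁ <;> simpa using h.2.1

theorem IsWalk.delEdge_of_not_mem {u v : V} (h : IsWalk G a b p) (hv : v ∉ p) :
    IsWalk (DelEdge G u v) a b p :=
  ⟨h.1.imp_of_mem_imp fun _ _ _ hy hxy => ⟨hxy, fun he => hv (he.2 ▸ hy)⟩, h.2⟩

end Walks

theorem delEdge_le (G : V → V → Prop) (a b : V) : DelEdge G a b ≤ G := fun _ _ h => h.1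

theorem rev_delEdge (G : V → V → Prop) (a b : V) : Rev (DelEdge G a b) = DelEdge (Rev G) b a := by
  funext x y
  simp only [Rev, DelEdge, and_comm (a := y = a)]

section Dominators

variable {G H : V → V → Prop} {s u v x y : V}

theorem reach_delEdge_of_not_dom (h : ¬ Dom G s v y) : Reach (DelEdge G u v) s y := by
  simp only [Dom, not_forall] at h
  obtain ⟨p, hp, hv⟩ := h
  exact ⟨p, hp.delEdge_of_not_mem hv⟩

theorem Dom.reach_of_reach (hHG : H ≤ G) (hdom : Dom G s v x) (h : Reach H s x) :
    Reach H s v := by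
  obtain ⟨p, hp⟩ := h
  exact hp.reach_of_mem (hdom p (hp.mono hHG))

theorem IsBridge.not_reach_delEdge (hbr : IsBridge G s u v) : ¬ Reach (DelEdge G u v) s v := by
  rintro ⟨p, hp⟩
  exact ((hbr.2 p (hp.mono (delEdge_le G u v))).rel hp.1).2 ⟨rfl, rfl⟩

theorem IsBridge.dom_of_reach_delEdge (hbr : IsBridge G s u v) (hdom : Dom G s v x)
    (h : Reach (DelEdge G u v) y x) : Dom G s v y := by
  by_contra hy
  exact hbr.not_reach_delEdge <|
    hdom.reach_of_reach (delEdge_le G u v) ((reach_delEdge_of_not_dom hy).trans h)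

end Dominators

theorem stmt8_general (G : V → V → Prop) (s u v : V)
    (hbr : IsBridge G s u v) (hbrR : IsBridge (Rev G) s v u)
    (C : Set V) (hC : IsSCC (DelEdge G u v) C)
    (x : V) (hx : x ∈ C) (hxD : Dom G s v x ∧ Dom (Rev G) s u x) :
    C ⊆ {y | Dom G s v y ∧ Dom (Rev G) s u y} := by
  intro y hy
  obtain ⟨hyx, hxy⟩ := hC.2.1 y hy x hx
  exact ⟨hbr.dom_of_reach_delEdge hxD.1 hyx,
    hbrR.dom_of_reach_delEdge hxD.2 (rev_delEdge G u v ▸ hxy.rev)⟩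

/-- If `(u,v)` is a common bridge of `G_s` and `G_s^R` and `C` is a strongly connected
component of `G \ (u,v)` meeting `D(v) ∩ D^R(u)`, then `C ⊆ D(v) ∩ D^R(u)`. -/
theorem stmt8 (G : V → V → Prop) (hG : StronglyConnected G) (s u v : V)
    (hsb : IsStrongBridge G u v)
    (hbr : IsBridge G s u v) (hbrR : IsBridge (Rev G) s v u)
    (C : Set V) (hC : IsSCC (DelEdge G u v) C)
    (x : V) (hx : x ∈ C) (hxD : Dom G s v x ∧ Dom (Rev G) s u x) :
    C ⊆ {y | Dom G s v y ∧ Dom (Rev G) s u y} :=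
  stmt8_general G s u v hbr hbrR C hC x hx hxD

end StrongConn
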